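/- arXiv:2208.10444 — 3 statements merged into one kernel-verified Lean document; each statement's English description precedes it below -/
import Mathlib

section
/- Under the hypotheses of the discrete dual-PIC bracket (J(Z) as in the blockwise definition with constant antisymmetric J_c, constant symmetric M_p commuting with J_c, smooth ψ^j), for each i = 1,…,N the function C_i(Z, μ) = μ_i − ψ^i(Z) (where ψ^i(Z) = ∑_a w_a ψ_i(z_a), encoded so that ∂C_i/∂Z = −M_p DΨ(Z) e_i appropriately) is a Casimir invariant: J(Z) · DC_i(Z, μ) = 0. -/
/-- The constraint functions `C_i(Z, μ) = μ_i − ∑_a w_a ψ_i(z_a)` are Casimir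
invariants of the discrete dual-PIC Poisson matrix: `J(Z) · DC_i = 0`. -/
theorem stmt5 (n Np N : ℕ) (Jc : Matrix (Fin (2 * n)) (Fin (2 * n)) ℝ)
    (hJc : Jc.transpose = -Jc)
    (w : Fin Np → ℝ) (hw : ∀ a, 0 < w a)
    (ψ : Fin N → (Fin (2 * n) → ℝ) → ℝ) (hψ : ∀ i, Differentiable ℝ (ψ i))
    (Z : Fin Np → Fin (2 * n) → ℝ)
    (Mp Jcb : Matrix (Fin Np × Fin (2 * n)) (Fin Np × Fin (2 * n)) ℝ)
    (hMp : ∀ p q, Mp p q = if p = q then w p.1 else 0)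
    (hJcb : ∀ p q, Jcb p q = if p.1 = q.1 then Jc p.2 q.2 else 0)
    (DΨ : Matrix (Fin Np × Fin (2 * n)) (Fin N) ℝ)
    (hDΨ : ∀ p i, DΨ p i = fderiv ℝ (ψ i) (Z p.1) (Pi.single p.2 1))
    (i : Fin N) (DC : (Fin Np × Fin (2 * n)) ⊕ Fin N → ℝ)
    (hDC1 : ∀ p, DC (Sum.inl p) = -(w p.1 * fderiv ℝ (ψ i) (Z p.1) (Pi.single p.2 1)))
    (hDC2 : ∀ j, DC (Sum.inr j) = if j = i then 1 else 0) :
    (Matrix.fromBlocks (Mp⁻¹ * Jcb) (Jcb * DΨ) (DΨ.transpose * Jcb)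
      (DΨ.transpose * Mp * Jcb * DΨ)).mulVec DC = 0 := by
  have hwne : ∀ a, w a ≠ 0 := fun a => (hw a).ne'
  set D : Matrix (Fin Np × Fin (2 * n)) (Fin Np × Fin (2 * n)) ℝ :=
    Matrix.diagonal (fun p => (w p.1)⁻¹) with hD
  have hMpd : Mp = Matrix.diagonal (fun p : Fin Np × Fin (2 * n) => w p.1) := by
    ext p q
    by_cases h : p = q <;> simp [hMp, Matrix.diagonal_apply, h]
  have hMD : Mp * D = 1 := by
    rw [hMpd, hD, Matrix.diagonal_mul_diagonal]
    have : (fun p : Fin Np × Fin (2 * n) => w p.1 * (w p.1)⁻¹) = fun _ => (1 : ℝ) :=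
      funext fun p => mul_inv_cancel₀ (hwne _)
    rw [this, Matrix.diagonal_one]
  have hMinv : Mp⁻¹ = D := Matrix.inv_eq_right_inv hMD
  have hDM : D * Mp = 1 := mul_eq_one_comm.mp hMD
  have hcomm : Mp * Jcb = Jcb * Mp := by
    ext p q
    rw [hMpd, Matrix.diagonal_mul, Matrix.mul_diagonal]
    by_cases h : p.1 = q.1
    · rw [hJcb, if_pos h, h, mul_comm]
    · simp [hJcb, h]
  -- rewrite DC as a Sum.elim
  have hDCe : DC = Sum.elim (fun q => -((Mp * DΨ) q i)) (Pi.single i 1) := by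
    funext x
    cases x with
    | inl p =>
        rw [Sum.elim_inl, hDC1, hMpd, Matrix.diagonal_mul, hDΨ]
    | inr j =>
        rw [Sum.elim_inr, hDC2, Pi.single_apply]
  rw [hDCe]
  have hx : (fun q => -((Mp * DΨ) q i)) = -((Mp * DΨ).mulVec (Pi.single i 1)) := by
    funext q
    simp [Matrix.mulVec_single]
  rw [hx, Matrix.fromBlocks_mulVec]
  have key1 : Mp⁻¹ * Jcb * (Mp * DΨ) = Jcb * DΨ := by
    calc Mp⁻¹ * Jcb * (Mp * DΨ) = Mp⁻¹ * (Jcb * Mp) * DΨ := by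
          simp only [Matrix.mul_assoc]
      _ = Mp⁻¹ * (Mp * Jcb) * DΨ := by rw [hcomm]
      _ = (Mp⁻¹ * Mp) * Jcb * DΨ := by simp only [Matrix.mul_assoc]
      _ = Jcb * DΨ := by rw [hMinv, hDM, one_mul]
  have key2 : DΨ.transpose * Jcb * (Mp * DΨ) = DΨ.transpose * Mp * Jcb * DΨ := by
    calc DΨ.transpose * Jcb * (Mp * DΨ) = DΨ.transpose * (Jcb * Mp) * DΨ := by
          simp only [Matrix.mul_assoc]
      _ = DΨ.transpose * (Mp * Jcb) * DΨ := by rw [hcomm]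
      _ = DΨ.transpose * Mp * Jcb * DΨ := by simp only [Matrix.mul_assoc]
  simp only [Sum.elim_comp_inl, Sum.elim_comp_inr]
  rw [Matrix.mulVec_neg, Matrix.mulVec_mulVec, key1, Matrix.mulVec_neg,
    Matrix.mulVec_mulVec, key2]
  funext x
  cases x <;> simp
end

section
/- On the solution set of the constraint ω = Ψ(X)^T w, the coupled system Ẋ = −J_c'[DΨ(X) L⁻¹ Ψ(X)^T w + DΨ(X) L⁻¹ ω], ω̇ = DΨ(X)^T M_p Ẋ reduces to Ẋ = −2 J_c' DΨ(X) L⁻¹ Ψ(X)^T w; more precisely, if (X(t), ω(t)) solves the coupled system with ω(0) = Ψ(X(0))^T w, then X(t) solves the reduced equation with the doubled coefficient and ω(t) = Ψ(X(t))^T w for all t. -/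
/-- Reduction to the Casimir leaf: if a solution of the coupled dual-PIC system
starts on the constraint set `ω = Ψ(X)ᵀ w`, then it stays on it and `X(t)`
solves the reduced equation `Ẋ = −2 J_c' DΨ(X) L⁻¹ Ψ(X)ᵀ w`. -/
theorem stmt13 (m Np N : ℕ) (Ψ : (Fin m → ℝ) → Matrix (Fin Np) (Fin N) ℝ)
    (w : Fin Np → ℝ) (Mp : Matrix (Fin m) (Fin m) ℝ) (hMp : Mp.transpose = Mp)
    (DΨ : (Fin m → ℝ) → Matrix (Fin m) (Fin N) ℝ)
    (L : Matrix (Fin N) (Fin N) ℝ) (hL : L.transpose = L) (hLu : IsUnit L.det)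
    (Jc' : Matrix (Fin m) (Fin m) ℝ) (hJc' : Jc'.transpose = -Jc')
    (hv : ∀ i, Differentiable ℝ (fun X => (Ψ X).transpose.mulVec w i))
    (hJac : ∀ X l i, fderiv ℝ (fun Y => (Ψ Y).transpose.mulVec w i) X (Pi.single l 1)
      = (Mp * DΨ X) l i)
    (X : ℝ → Fin m → ℝ) (ω : ℝ → Fin N → ℝ) (Xdot : ℝ → Fin m → ℝ)
    (hXdot : ∀ t, Xdot t = -(Jc'.mulVec
      ((DΨ (X t)).mulVec ((L⁻¹).mulVec ((Ψ (X t)).transpose.mulVec w))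
        + (DΨ (X t)).mulVec ((L⁻¹).mulVec (ω t)))))
    (hX : ∀ t l, HasDerivAt (fun s => X s l) (Xdot t l) t)
    (hω : ∀ t i, HasDerivAt (fun s => ω s i)
      (((DΨ (X t)).transpose.mulVec (Mp.mulVec (Xdot t))) i) t)
    (h0 : ω 0 = (Ψ (X 0)).transpose.mulVec w) :
    (∀ t, ω t = (Ψ (X t)).transpose.mulVec w) ∧
    (∀ t l, HasDerivAt (fun s => X s l)
      ((-2 : ℝ) * (Jc'.mulVec ((DΨ (X t)).mulVec
        ((L⁻¹).mulVec ((Ψ (X t)).transpose.mulVec w)))) l) t) := by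
  -- derivative of X as a curve in ℝ^m
  have hXt : ∀ t, HasDerivAt X (Xdot t) t := fun t => hasDerivAt_pi.mpr (hX t)
  -- derivative of s ↦ (Ψ (X s))ᵀ w i
  have hΨd : ∀ t i, HasDerivAt (fun s => (Ψ (X s)).transpose.mulVec w i)
      (((DΨ (X t)).transpose.mulVec (Mp.mulVec (Xdot t))) i) t := by
    intro t i
    have hfd := ((hv i).differentiableAt (x := X t)).hasFDerivAt
    have hcomp := hfd.comp_hasDerivAt t (hXt t)
    have hkey : fderiv ℝ (fun Y => (Ψ Y).transpose.mulVec w i) (X t) (Xdot t)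
        = ((DΨ (X t)).transpose.mulVec (Mp.mulVec (Xdot t))) i := by
      have hdec : Xdot t = ∑ l : Fin m, (Xdot t l) • (Pi.single l 1 : Fin m → ℝ) := by
        funext k
        simp [Finset.sum_apply, Pi.single_apply]
      have hlin : fderiv ℝ (fun Y => (Ψ Y).transpose.mulVec w i) (X t) (Xdot t)
          = ∑ l : Fin m, Xdot t l * (Mp * DΨ (X t)) l i := by
        conv_lhs => rw [hdec]
        rw [map_sum]
        simp [hJac, smul_eq_mul]
      rw [hlin]
      simp only [Matrix.mulVec, dotProduct, Matrix.mul_apply,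
        Matrix.transpose_apply, Finset.mul_sum, Finset.sum_mul]
      rw [Finset.sum_comm]
      refine Finset.sum_congr rfl fun l _ => Finset.sum_congr rfl fun j _ => ?_
      have hsym : Mp j l = Mp l j := congrFun (congrFun hMp l) j
      rw [hsym]
      ring
    rw [← hkey]
    exact hcomp
  -- the constraint is conserved
  have hcons : ∀ t, ω t = (Ψ (X t)).transpose.mulVec w := by
    intro t
    funext i
    have hg : ∀ s, HasDerivAt (fun u => ω u i - (Ψ (X u)).transpose.mulVec w i) 0 s := by
      intro s
      have := (hω s i).sub (hΨd s i)
      rw [sub_self] at this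
      exact this
    have hconst : ∀ s, (fun u => ω u i - (Ψ (X u)).transpose.mulVec w i) s
        = (fun u => ω u i - (Ψ (X u)).transpose.mulVec w i) 0 := by
      intro s
      exact is_const_of_deriv_eq_zero (fun u => (hg u).differentiableAt)
        (fun u => (hg u).deriv) s 0
    have := hconst t
    simp only at this
    have h0i : ω 0 i - (Ψ (X 0)).transpose.mulVec w i = 0 := by rw [h0]; ring
    have : ω t i - (Ψ (X t)).transpose.mulVec w i = 0 := by rw [this, h0i]
    linarith
  refine ⟨hcons, fun t l => ?_⟩
  have hval : Xdot t l = (-2 : ℝ) * (Jc'.mulVec ((DΨ (X t)).mulVec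
      ((L⁻¹).mulVec ((Ψ (X t)).transpose.mulVec w)))) l := by
    rw [hXdot t, hcons t]
    simp [Matrix.mulVec_add]
    ring
  rw [← hval]
  exact hX t l
end

section
/- Energy conservation for the discrete Vlasov-Poisson dual-PIC system: if (X(t), V(t)) solves Ẋ = V, V̇ = −c · DΨ(X) L⁻¹ Ψ(X)^T w (c > 0 constant), with M_p = diag(w) ⊗ I_d, L symmetric, and Jacobian identity ∂(Ψ(X)^T w)/∂X = M_p DΨ(X), then H(X,V) = ½ V^T M_p V + (c/2) w^T Ψ(X) L⁻¹ Ψ(X)^T w is constant in time. -/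
/-- Energy conservation for the discrete dual-PIC Vlasov-Poisson system:
along solutions of `Ẋ = V`, `V̇ = −c DΨ(X) L⁻¹ Ψ(X)ᵀ w`, the Hamiltonian
`H = ½ Vᵀ M_p V + (c/2) wᵀ Ψ(X) L⁻¹ Ψ(X)ᵀ w` is constant. -/
theorem stmt16 (Np d N : ℕ) (w : Fin Np → ℝ)
    (Mp : Matrix (Fin Np × Fin d) (Fin Np × Fin d) ℝ)
    (hMp : ∀ p q, Mp p q = if p = q then w p.1 else 0)
    (L : Matrix (Fin N) (Fin N) ℝ) (hL : L.transpose = L) (hLu : IsUnit L.det)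
    (c : ℝ) (hc : 0 < c)
    (Ψ : (Fin Np × Fin d → ℝ) → Matrix (Fin Np) (Fin N) ℝ)
    (DΨ : (Fin Np × Fin d → ℝ) → Matrix (Fin Np × Fin d) (Fin N) ℝ)
    (hv : ∀ i, Differentiable ℝ (fun X => (Ψ X).transpose.mulVec w i))
    (hJac : ∀ X l i, fderiv ℝ (fun Y => (Ψ Y).transpose.mulVec w i) X (Pi.single l 1)
      = (Mp * DΨ X) l i)
    (X V : ℝ → Fin Np × Fin d → ℝ)
    (hX : ∀ t l, HasDerivAt (fun s => X s l) (V t l) t)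
    (hV : ∀ t l, HasDerivAt (fun s => V s l)
      (-(c * ((DΨ (X t)).mulVec ((L⁻¹).mulVec ((Ψ (X t)).transpose.mulVec w)) l))) t)
    (H : (Fin Np × Fin d → ℝ) → (Fin Np × Fin d → ℝ) → ℝ)
    (hH : ∀ X' V', H X' V' = (1 / 2 : ℝ) * dotProduct V' (Mp.mulVec V')
      + (c / 2) * dotProduct ((Ψ X').transpose.mulVec w)
          ((L⁻¹).mulVec ((Ψ X').transpose.mulVec w))) :
    ∀ t, H (X t) (V t) = H (X 0) (V 0) := by
  -- symmetry of L⁻¹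
  have hLinv : ∀ i j, (L⁻¹) i j = (L⁻¹) j i := by
    intro i j
    have h1 : (L⁻¹).transpose = L⁻¹ := by
      rw [Matrix.transpose_nonsing_inv, hL]
    calc (L⁻¹) i j = (L⁻¹).transpose j i := rfl
      _ = (L⁻¹) j i := by rw [h1]
  -- diagonal structure of Mp
  have hMv : ∀ (v : Fin Np × Fin d → ℝ) p, Mp.mulVec v p = w p.1 * v p := by
    intro v p
    simp [Matrix.mulVec, dotProduct, hMp, ite_mul]
  have hMD : ∀ Y p i, (Mp * DΨ Y) p i = w p.1 * DΨ Y p i := by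
    intro Y p i
    simp [Matrix.mul_apply, hMp, ite_mul]
  -- X as a curve in the product space
  have hXt : ∀ t, HasDerivAt X (V t) t := fun t => hasDerivAt_pi.2 (hX t)
  -- derivative of the charge vector G s := Ψ(X s)ᵀ w
  have hg : ∀ t i, HasDerivAt (fun s => (Ψ (X s)).transpose.mulVec w i)
      (∑ l, V t l * (Mp * DΨ (X t)) l i) t := by
    intro t i
    have hF : HasFDerivAt (fun Y => (Ψ Y).transpose.mulVec w i)
        (fderiv ℝ (fun Y => (Ψ Y).transpose.mulVec w i) (X t)) (X t) :=
      ((hv i) (X t)).hasFDerivAt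
    have hcomp := hF.comp_hasDerivAt t (hXt t)
    convert hcomp using 1
    · rfl
    · rfl
    · rfl
    have hvdec : V t = ∑ l, (V t l) • (Pi.single l (1 : ℝ) : Fin Np × Fin d → ℝ) := by
      ext m
      simp [Finset.sum_apply, Pi.single_apply]
    conv_rhs => rw [hvdec]
    rw [map_sum]
    refine Finset.sum_congr rfl fun l _ => ?_
    rw [map_smul, hJac (X t) l i]
    simp [smul_eq_mul]
  -- the key: derivative of the energy is 0
  have key : ∀ t, HasDerivAt (fun s => H (X s) (V s)) 0 t := by
    intro t
    set a : Fin Np × Fin d → ℝ := fun l =>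
      -(c * ((DΨ (X t)).mulVec ((L⁻¹).mulVec ((Ψ (X t)).transpose.mulVec w)) l)) with ha
    set g' : Fin N → ℝ := fun i => ∑ l, V t l * (Mp * DΨ (X t)) l i with hg'
    -- kinetic part
    have e1 : (fun s => (1 / 2 : ℝ) * dotProduct (V s) (Mp.mulVec (V s)))
        = fun s => ∑ p, (1 / 2 : ℝ) * (w p.1 * (V s p * V s p)) := by
      funext s
      rw [dotProduct, Finset.mul_sum]
      refine Finset.sum_congr rfl fun p _ => ?_
      rw [hMv]; ring
    have h1 : HasDerivAt (fun s => (1 / 2 : ℝ) * dotProduct (V s) (Mp.mulVec (V s)))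
        (∑ p, (1 / 2 : ℝ) * (w p.1 * (a p * V t p + V t p * a p))) t := by
      rw [e1]
      exact HasDerivAt.fun_sum fun p _ =>
        (((hV t p).mul (hV t p)).const_mul (w p.1)).const_mul (1 / 2 : ℝ)
    -- potential part
    have e2 : (fun s => (c / 2) * dotProduct ((Ψ (X s)).transpose.mulVec w)
          ((L⁻¹).mulVec ((Ψ (X s)).transpose.mulVec w)))
        = fun s => ∑ i, ∑ j, (c / 2) * ((L⁻¹) i j *
            ((Ψ (X s)).transpose.mulVec w i * (Ψ (X s)).transpose.mulVec w j)) := by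
      funext s
      simp only [dotProduct, Matrix.mulVec, Finset.mul_sum]
      refine Finset.sum_congr rfl fun i _ => Finset.sum_congr rfl fun j _ =>
        Finset.sum_congr rfl fun p _ => ?_
      ring
    have h2 : HasDerivAt (fun s => (c / 2) * dotProduct ((Ψ (X s)).transpose.mulVec w)
          ((L⁻¹).mulVec ((Ψ (X s)).transpose.mulVec w)))
        (∑ i, ∑ j, (c / 2) * ((L⁻¹) i j *
          (g' i * (Ψ (X t)).transpose.mulVec w j + (Ψ (X t)).transpose.mulVec w i * g' j))) t := by
      rw [e2]
      exact HasDerivAt.fun_sum fun i _ => HasDerivAt.fun_sum fun j _ =>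
        (((hg t i).mul (hg t j)).const_mul ((L⁻¹) i j)).const_mul (c / 2)
    have hsum := h1.add h2
    have hfun : (fun s => H (X s) (V s)) = fun s =>
        (1 / 2 : ℝ) * dotProduct (V s) (Mp.mulVec (V s))
        + (c / 2) * dotProduct ((Ψ (X s)).transpose.mulVec w)
            ((L⁻¹).mulVec ((Ψ (X s)).transpose.mulVec w)) := by
      funext s; rw [hH]
    rw [hfun]
    convert hsum using 1
    · rfl
    · rfl
    · rfl
    -- now pure algebra: show the total derivative is 0
    set G : Fin N → ℝ := (Ψ (X t)).transpose.mulVec w with hG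
    set u : Fin N → ℝ := (L⁻¹).mulVec G with hu
    have hD : ∀ p, a p = -(c * ((DΨ (X t)).mulVec u) p) := fun p => rfl
    -- the potential derivative equals 2 (c/2) ∑ g' i * u i
    have hpot : (∑ i, ∑ j, (c / 2) * ((L⁻¹) i j * (g' i * G j + G i * g' j)))
        = c * ∑ i, g' i * u i := by
      have hswap : (∑ i, ∑ j, (c / 2) * ((L⁻¹) i j * (G i * g' j)))
          = ∑ i, ∑ j, (c / 2) * ((L⁻¹) i j * (g' i * G j)) := by
        rw [Finset.sum_comm]
        refine Finset.sum_congr rfl fun i _ => Finset.sum_congr rfl fun j _ => ?_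
        rw [hLinv j i]; ring
      have expand : (∑ i, ∑ j, (c / 2) * ((L⁻¹) i j * (g' i * G j + G i * g' j)))
          = (∑ i, ∑ j, (c / 2) * ((L⁻¹) i j * (g' i * G j)))
            + ∑ i, ∑ j, (c / 2) * ((L⁻¹) i j * (G i * g' j)) := by
        rw [← Finset.sum_add_distrib]
        refine Finset.sum_congr rfl fun i _ => ?_
        rw [← Finset.sum_add_distrib]
        refine Finset.sum_congr rfl fun j _ => ?_
        ring
      have hS : (∑ i, ∑ j, (c / 2) * ((L⁻¹) i j * (g' i * G j)))
          = (c / 2) * ∑ i, g' i * u i := by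
        rw [Finset.mul_sum]
        refine Finset.sum_congr rfl fun i _ => ?_
        simp only [hu, Matrix.mulVec, dotProduct, Finset.mul_sum]
        refine Finset.sum_congr rfl fun j _ => ?_
        ring
      rw [expand, hswap, hS]; ring
    -- rewrite ∑ g' i * u i as ∑ over particles
    have hgu : (∑ i, g' i * u i) = ∑ p, w p.1 * (V t p * ((DΨ (X t)).mulVec u) p) := by
      have step : (∑ i, g' i * u i)
          = ∑ i, ∑ p, w p.1 * (V t p * (DΨ (X t) p i * u i)) := by
        refine Finset.sum_congr rfl fun i _ => ?_
        rw [hg', Finset.sum_mul]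
        refine Finset.sum_congr rfl fun p _ => ?_
        rw [hMD]; ring
      rw [step, Finset.sum_comm]
      refine Finset.sum_congr rfl fun p _ => ?_
      simp only [Matrix.mulVec, dotProduct, Finset.mul_sum]
    rw [hpot, hgu]
    have step2 : (∑ p, (1 / 2 : ℝ) * (w p.1 * (a p * V t p + V t p * a p)))
        = ∑ p, -(c * (w p.1 * (V t p * ((DΨ (X t)).mulVec u) p))) := by
      refine Finset.sum_congr rfl fun p _ => ?_
      rw [hD]; ring
    rw [step2, Finset.mul_sum, ← Finset.sum_add_distrib]
    simp
  intro t
  have hdiff : Differentiable ℝ (fun s => H (X s) (V s)) := fun s => (key s).differentiableAt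
  exact is_const_of_deriv_eq_zero hdiff (fun s => (key s).deriv) t 0
end
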